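/- Let P ⊆ ℝ^d be a polytope with 0 in its interior that is self-polar by an orthogonal transformation U (P = U P°), and let H be a linear subspace of ℝ^d with U H = H and proj_H(P) = P ∩ H. Then P ∩ H is self-polar in H by the restriction of U to H: P ∩ H = U (P ∩ H)°, where the polar is taken within H. -/

import Mathlib

noncomputable section

/-- The polar of a set `P ⊆ ℝ^d`. -/
def polar {d : ℕ} (A : Set (EuclideanSpace ℝ (Fin d))) : Set (EuclideanSpace ℝ (Fin d)) :=
  {x | ∀ a ∈ A, inner ℝ x a ≤ (1 : ℝ)}

/-- The polar taken within a subspace `H`. -/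
def polarIn {d : ℕ} (H : Submodule ℝ (EuclideanSpace ℝ (Fin d)))
    (A : Set (EuclideanSpace ℝ (Fin d))) : Set (EuclideanSpace ℝ (Fin d)) :=
  {y | y ∈ H ∧ ∀ a ∈ A, inner ℝ y a ≤ (1 : ℝ)}

theorem section_selfPolar {d : ℕ} (P : Set (EuclideanSpace ℝ (Fin d)))
    (hP : ∃ V : Finset (EuclideanSpace ℝ (Fin d)),
      P = convexHull ℝ (V : Set (EuclideanSpace ℝ (Fin d))))
    (h0 : 0 ∈ interior P)
    (U : EuclideanSpace ℝ (Fin d) ≃ₗᵢ[ℝ] EuclideanSpace ℝ (Fin d))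
    (hself : P = ⇑U '' polar P)
    (H : Submodule ℝ (EuclideanSpace ℝ (Fin d)))
    (hUH : ⇑U '' (H : Set (EuclideanSpace ℝ (Fin d))) = H)
    (hproj : (fun x => (H.orthogonalProjection x : EuclideanSpace ℝ (Fin d))) '' P
      = P ∩ (H : Set (EuclideanSpace ℝ (Fin d)))) :
    P ∩ (H : Set (EuclideanSpace ℝ (Fin d))) =
      ⇑U '' polarIn H (P ∩ (H : Set (EuclideanSpace ℝ (Fin d)))) := by
  have key : polarIn H (P ∩ (H : Set (EuclideanSpace ℝ (Fin d))))
      = polar P ∩ (H : Set (EuclideanSpace ℝ (Fin d))) := by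
    ext y
    constructor
    · rintro ⟨hyH, hy⟩
      refine ⟨fun a ha => ?_, hyH⟩
      have hmem : (H.orthogonalProjection a : EuclideanSpace ℝ (Fin d))
          ∈ P ∩ (H : Set (EuclideanSpace ℝ (Fin d))) := by
        rw [← hproj]; exact ⟨a, ha, rfl⟩
      have horth : inner ℝ (a - (H.orthogonalProjection a : EuclideanSpace ℝ (Fin d))) y
          = (0 : ℝ) := Submodule.starProjection_inner_eq_zero (K := H) a y hyH
      have : inner ℝ y a = (inner ℝ y ((H.orthogonalProjection a : EuclideanSpace ℝ (Fin d))) : ℝ) := by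
        have := real_inner_comm (a - (H.orthogonalProjection a : EuclideanSpace ℝ (Fin d))) y
        rw [horth] at this
        rw [inner_sub_right] at this
        linarith
      rw [this]
      exact hy _ hmem
    · rintro ⟨hy, hyH⟩
      exact ⟨hyH, fun a ha => hy a ha.1⟩
  rw [key, Set.image_inter U.injective, hUH, ← hself]
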